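/- Let x be a trigonometric polynomial of degree N and let f = x^φ. If the number of equally spaced sample points satisfies M > (φ+1)N, then for every harmonic index 0 ≤ k ≤ N, the discrete Fourier coefficient of f computed from the M samples (i.e., the corresponding entry of E*·f̃) equals the exact continuous Fourier coefficient of f of order k. -/

import Mathlib

/-!
Work with complex trigonometric polynomials, the span of the modes `t ↦ exp (i n t)` with
`|n| ≤ L`. They are closed under multiplication, with degrees adding, so `f = x ^ φ` has degree
`φ N`, and `f · cos (k ·)`, `f · sin (k ·)` have degree at most `(φ + 1) N < M`. For such
polynomials the Riemann sum over the `M` sample points is exact: a mode with `0 < |n| < M`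
samples to the powers of an `M`-th root of unity `≠ 1`, which sum to zero, just as its integral
over a period vanishes. This is the absence of aliasing.
-/

open Real Finset intervalIntegral

open Complex in
def trigPoly (L : ℕ) : Submodule ℂ (ℝ → ℂ) :=
  Submodule.span ℂ {g | ∃ n : ℤ, |n| ≤ L ∧ g = fun t : ℝ => cexp (n * t * I)}

theorem sum_Icc_pow_eq_zero {K : Type*} [Field K] {w : K} {M : ℕ} (hw : w ≠ 1)
    (hwM : w ^ M = 1) : ∑ j ∈ Icc 1 M, w ^ j = 0 := by
  rw [← Ico_add_one_right_eq_Icc, sum_Ico_eq_sum_range]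
  simp [pow_add, ← mul_sum, geom_sum_eq hw, hwM]

open Complex in
theorem sum_exp_int_mul_sample_eq_zero {M : ℕ} {n : ℤ} (hn0 : n ≠ 0) (hnM : |n| < M) :
    ∑ j ∈ Icc 1 M, cexp (n * (2 * π * j / M : ℝ) * I) = 0 := by
  have hM : M ≠ 0 := by rintro rfl; simp at hnM; linarith [abs_nonneg n]
  have hζ := isPrimitiveRoot_exp M hM
  refine (sum_congr rfl fun j _ => ?_).trans
    (sum_Icc_pow_eq_zero (w := cexp (2 * π * I / M) ^ n) ?_ ?_)
  · rw [← exp_int_mul, ← Complex.exp_nat_mul]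
    congr 1
    push_cast
    field_simp
  · rw [Ne, hζ.zpow_eq_one_iff_dvd]
    exact fun h => hn0 (Int.eq_zero_of_abs_lt_dvd h hnM)
  · rw [← zpow_natCast, ← zpow_mul, mul_comm n, zpow_mul, zpow_natCast, hζ.pow_eq_one, one_zpow]

open Complex in
theorem integral_exp_int_mul_I {n : ℤ} (hn : n ≠ 0) :
    ∫ t in (0 : ℝ)..2 * π, cexp (n * t * I) = 0 := by
  simp_rw [mul_right_comm _ _ I]
  rw [integral_exp_mul_complex (by simpa using hn)]
  push_cast
  rw [mul_right_comm, mul_assoc, exp_int_mul_two_pi_mul_I]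
  simp

namespace trigPoly

open Complex

variable {L L' : ℕ}

theorem exp_mem {n : ℤ} (hn : |n| ≤ L) : (fun t : ℝ => cexp (n * t * I)) ∈ trigPoly L :=
  Submodule.subset_span ⟨n, hn, rfl⟩

theorem one_mem : (1 : ℝ → ℂ) ∈ trigPoly L := by
  simpa [Pi.one_def] using exp_mem (L := L) (n := 0) (by simp)

theorem mul_mem {g h : ℝ → ℂ} (hg : g ∈ trigPoly L) (hh : h ∈ trigPoly L') :
    g * h ∈ trigPoly (L + L') := by
  have hgh : g * h ∈ trigPoly L * trigPoly L' := Submodule.mul_mem_mul hg hh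
  rw [trigPoly, trigPoly, Submodule.span_mul_span] at hgh
  refine Submodule.span_mono ?_ hgh
  rintro _ ⟨_, ⟨n, hn, rfl⟩, _, ⟨m, hm, rfl⟩, rfl⟩
  refine ⟨n + m, ?_, ?_⟩
  · push_cast
    exact (abs_add_le n m).trans (add_le_add hn hm)
  · funext t
    change cexp (n * t * I) * cexp (m * t * I) = _
    rw [← Complex.exp_add]
    push_cast
    ring_nf

theorem pow_mem {g : ℝ → ℂ} (hg : g ∈ trigPoly L) (k : ℕ) : g ^ k ∈ trigPoly (k * L) := by
  induction k with
  | zero => simpa using one_mem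
  | succ k ih => simpa [pow_succ, add_mul] using mul_mem ih hg

theorem ofReal_mul_mem {F G : ℝ → ℝ} (hF : (fun t => (F t : ℂ)) ∈ trigPoly L)
    (hG : (fun t => (G t : ℂ)) ∈ trigPoly L') :
    (fun t => ((F t * G t : ℝ) : ℂ)) ∈ trigPoly (L + L') := by
  push_cast
  exact mul_mem hF hG

theorem ofReal_pow_mem {F : ℝ → ℝ} (hF : (fun t => (F t : ℂ)) ∈ trigPoly L) (k : ℕ) :
    (fun t => ((F t ^ k : ℝ) : ℂ)) ∈ trigPoly (k * L) := by
  push_cast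
  exact pow_mem hF k

theorem cos_mem {n : ℕ} (hn : n ≤ L) : (fun t : ℝ => (Real.cos (n * t) : ℂ)) ∈ trigPoly L := by
  have hn' : |(n : ℤ)| ≤ L := by simpa using hn
  have h := add_mem (exp_mem hn') (exp_mem (n := -n) (by simpa using hn'))
  convert Submodule.smul_mem _ (1 / 2 : ℂ) h using 1
  funext t
  simp only [Pi.smul_apply, Pi.add_apply, smul_eq_mul, ofReal_cos, Complex.cos]
  push_cast
  ring_nf

theorem sin_mem {n : ℕ} (hn : n ≤ L) : (fun t : ℝ => (Real.sin (n * t) : ℂ)) ∈ trigPoly L := by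
  have hn' : |(n : ℤ)| ≤ L := by simpa using hn
  have h := sub_mem (exp_mem (n := -n) (by simpa using hn')) (exp_mem hn')
  convert Submodule.smul_mem _ (I / 2 : ℂ) h using 1
  funext t
  simp only [Pi.smul_apply, Pi.sub_apply, smul_eq_mul, ofReal_sin, Complex.sin]
  push_cast
  ring_nf

theorem ofReal_trigSum_mem (a b : ℕ → ℝ) :
    (fun t : ℝ =>
      ((a 0 + ∑ n ∈ Icc 1 L, (a n * Real.cos (n * t) + b n * Real.sin (n * t)) : ℝ) : ℂ))
      ∈ trigPoly L := by
  have h : (a 0 : ℂ) • (1 : ℝ → ℂ) + ∑ n ∈ Icc 1 L,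
      ((a n : ℂ) • (fun t : ℝ => (Real.cos (n * t) : ℂ)) +
        (b n : ℂ) • (fun t : ℝ => (Real.sin (n * t) : ℂ))) ∈ trigPoly L := by
    refine add_mem (Submodule.smul_mem _ _ one_mem) (Submodule.sum_mem _ fun n hn => ?_)
    have hnL := (mem_Icc.mp hn).2
    exact add_mem (Submodule.smul_mem _ _ (cos_mem hnL)) (Submodule.smul_mem _ _ (sin_mem hnL))
  convert h using 1
  funext t
  simp

theorem continuous_of_mem {g : ℝ → ℂ} (hg : g ∈ trigPoly L) : Continuous g := by
  induction hg using Submodule.span_induction with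
  | mem g hg => obtain ⟨n, -, rfl⟩ := hg; fun_prop
  | zero => exact continuous_const
  | add u v _ _ hu hv => exact hu.add hv
  | smul c u _ hu => exact hu.const_smul c

theorem riemannSum_eq_integral {M : ℕ} (hLM : L < M) {g : ℝ → ℂ} (hg : g ∈ trigPoly L) :
    (2 * π / M : ℝ) • ∑ j ∈ Icc 1 M, g (2 * π * j / M) = ∫ t in (0 : ℝ)..2 * π, g t := by
  have hM : (M : ℂ) ≠ 0 := by norm_cast; omega
  induction hg using Submodule.span_induction with
  | mem g hg =>
    obtain ⟨n, hn, rfl⟩ := hg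
    rcases eq_or_ne n 0 with rfl | hn0
    · simp [hM]
    · rw [sum_exp_int_mul_sample_eq_zero hn0 (hn.trans_lt (by exact_mod_cast hLM)),
        integral_exp_int_mul_I hn0, smul_zero]
  | zero => simp
  | add u v hu hv hu' hv' =>
    simp only [Pi.add_apply, sum_add_distrib, smul_add, hu', hv']
    rw [intervalIntegral.integral_add ((continuous_of_mem hu).intervalIntegrable _ _)
      ((continuous_of_mem hv).intervalIntegrable _ _)]
  | smul c u _ hu =>
    simp only [Pi.smul_apply, ← smul_sum, intervalIntegral.integral_smul, ← hu]
    exact smul_comm _ _ _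

theorem riemannSum_eq_integral_ofReal {M : ℕ} (hLM : L < M) {F : ℝ → ℝ}
    (hF : (fun t => (F t : ℂ)) ∈ trigPoly L) :
    2 * π / M * ∑ j ∈ Icc 1 M, F (2 * π * j / M) = ∫ t in (0 : ℝ)..2 * π, F t := by
  have h := riemannSum_eq_integral hLM hF
  rw [Complex.real_smul, ← Complex.ofReal_sum, intervalIntegral.integral_ofReal] at h
  exact_mod_cast h

end trigPoly

theorem conditional_equivalence_RHB_general (N φ M : ℕ) (hM : M > (φ + 1) * N)
    (a b : ℕ → ℝ) (x f : ℝ → ℝ)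
    (hx : ∀ t, x t = a 0 + ∑ n ∈ Finset.Icc 1 N,
        (a n * Real.cos (n * t) + b n * Real.sin (n * t)))
    (hf : ∀ t, f t = (x t) ^ φ) :
    ((1 / (M : ℝ)) * ∑ j ∈ Finset.Icc 1 M, f (2 * π * j / M) =
        (1 / (2 * π)) * ∫ θ in (0 : ℝ)..(2 * π), f θ) ∧
    ∀ k, 1 ≤ k → k ≤ N →
      ((2 / (M : ℝ)) * ∑ j ∈ Finset.Icc 1 M, f (2 * π * j / M) * Real.cos (k * (2 * π * j / M)) =
          (1 / π) * ∫ θ in (0 : ℝ)..(2 * π), f θ * Real.cos (k * θ)) ∧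
      ((2 / (M : ℝ)) * ∑ j ∈ Finset.Icc 1 M, f (2 * π * j / M) * Real.sin (k * (2 * π * j / M)) =
          (1 / π) * ∫ θ in (0 : ℝ)..(2 * π), f θ * Real.sin (k * θ)) := by
  have hx' : (fun t => (x t : ℂ)) ∈ trigPoly N := by
    simpa only [hx] using trigPoly.ofReal_trigSum_mem a b
  have hf' : (fun t => (f t : ℂ)) ∈ trigPoly (φ * N) := by
    simpa only [hf] using trigPoly.ofReal_pow_mem hx' φ
  have hfM : φ * N < M := by nlinarith
  have hcoeffM : φ * N + N < M := by nlinarith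
  have hπ : π ≠ 0 := pi_ne_zero
  have hM0 : (M : ℝ) ≠ 0 := by norm_cast; omega
  refine ⟨?_, fun k _ hkN => ⟨?_, ?_⟩⟩
  · rw [← trigPoly.riemannSum_eq_integral_ofReal hfM hf', ← mul_assoc]
    congr 1
    field_simp
  · rw [← trigPoly.riemannSum_eq_integral_ofReal hcoeffM
      (trigPoly.ofReal_mul_mem hf' (trigPoly.cos_mem hkN)), ← mul_assoc]
    congr 1
    field_simp
  · rw [← trigPoly.riemannSum_eq_integral_ofReal hcoeffM
      (trigPoly.ofReal_mul_mem hf' (trigPoly.sin_mem hkN)), ← mul_assoc]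
    congr 1
    field_simp

theorem conditional_equivalence_RHB (N φ M : ℕ) (hφ : 1 ≤ φ) (hM : M > (φ + 1) * N)
    (a b : ℕ → ℝ) (x f : ℝ → ℝ)
    (hx : ∀ t, x t = a 0 + ∑ n ∈ Finset.Icc 1 N,
        (a n * Real.cos (n * t) + b n * Real.sin (n * t)))
    (hf : ∀ t, f t = (x t) ^ φ) :
    ((1 / (M : ℝ)) * ∑ j ∈ Finset.Icc 1 M, f (2 * π * j / M) =
        (1 / (2 * π)) * ∫ θ in (0 : ℝ)..(2 * π), f θ) ∧
    ∀ k, 1 ≤ k → k ≤ N →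
      ((2 / (M : ℝ)) * ∑ j ∈ Finset.Icc 1 M, f (2 * π * j / M) * Real.cos (k * (2 * π * j / M)) =
          (1 / π) * ∫ θ in (0 : ℝ)..(2 * π), f θ * Real.cos (k * θ)) ∧
      ((2 / (M : ℝ)) * ∑ j ∈ Finset.Icc 1 M, f (2 * π * j / M) * Real.sin (k * (2 * π * j / M)) =
          (1 / π) * ∫ θ in (0 : ℝ)..(2 * π), f θ * Real.sin (k * θ)) :=
  conditional_equivalence_RHB_general N φ M hM a b x f hx hf
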